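/- arXiv:1212.1815 — 2 statements merged into one kernel-verified Lean document; each statement's English description precedes it below -/
import Mathlib

section
/- Let K ⊂ ℝ^n be an n-dimensional non-degenerate unbounded convex polyhedron in FU-position with respect to ker(ĥ), with sawing hyperplane Π, and set P := K ∩ Π. Let W be an affine subspace of Π of dimension n−2 such that W ∩ P ≠ ∅ and P is contained in one of the two closed half-spaces of Π bounded by W (i.e., W supports P inside Π). Let p ∈ W ∩ P be a vertex of the polyhedron P and let A be an unbounded edge of K with A ∩ Π = {p}. Then the affine span H of W ∪ A is an affine hyperplane of ℝ^n and H is a supporting hyperplane of K. -/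
open Bornology Pointwise

/-- A convex polyhedron in `ℝ^n`: a finite intersection of closed half-spaces
`{x | ℓ x ≤ c}` with `ℓ` a nonzero linear functional (the empty intersection,
i.e. all of `ℝ^n`, is allowed). -/
def IsConvexPolyhedron (n : ℕ) (K : Set (Fin n → ℝ)) : Prop :=
  ∃ (m : ℕ) (L : Fin m → ((Fin n → ℝ) →ₗ[ℝ] ℝ)) (c : Fin m → ℝ),
    (∀ i, L i ≠ 0) ∧ K = {x | ∀ i, L i x ≤ c i}

/-- The dimension of a subset of `ℝ^n`: the dimension of its affine span. -/
noncomputable def polyDim (n : ℕ) (K : Set (Fin n → ℝ)) : ℕ :=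
  Module.finrank ℝ (affineSpan ℝ K).direction

/-- `F` is a face of `K`: the intersection of `K` with a supporting hyperplane,
i.e. an affine hyperplane meeting `K` such that `K` lies in one of the two
closed half-spaces it bounds. -/
def IsFaceOf (n : ℕ) (K F : Set (Fin n → ℝ)) : Prop :=
  ∃ (L : (Fin n → ℝ) →ₗ[ℝ] ℝ) (c : ℝ), L ≠ 0 ∧
    (K ∩ {x | L x = c}).Nonempty ∧ (∀ x ∈ K, L x ≤ c) ∧ F = K ∩ {x | L x = c}

/-- `p` is a vertex of `K`: the singleton `{p}` is a face of `K`. -/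
def IsVertexOf (n : ℕ) (K : Set (Fin n → ℝ)) (p : Fin n → ℝ) : Prop :=
  IsFaceOf n K {p}

/-- An edge of `K` is a face of dimension `1`. -/
def IsEdgeOf (n : ℕ) (K A : Set (Fin n → ℝ)) : Prop :=
  IsFaceOf n K A ∧ polyDim n A = 1

/-- A facet of `K` is a face of dimension `dim K - 1`. -/
def IsFacetOf (n : ℕ) (K F : Set (Fin n → ℝ)) : Prop :=
  IsFaceOf n K F ∧ polyDim n F + 1 = polyDim n K

/-- `A` is an unbounded edge of `K` with direction vector `v`,
i.e. `A = q + ℝ≥0·v` for some vertex `q` of `K` and `v ≠ 0`. -/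
def IsUnboundedEdgeWithDir (n : ℕ) (K A : Set (Fin n → ℝ)) (v : Fin n → ℝ) : Prop :=
  IsEdgeOf n K A ∧ ¬ IsBounded A ∧ v ≠ 0 ∧
    ∃ q, IsVertexOf n K q ∧ A = {x | ∃ t : ℝ, 0 ≤ t ∧ x = q + t • v}

/-- The recession cone of `K`. -/
def recCone (n : ℕ) (K : Set (Fin n → ℝ)) : Set (Fin n → ℝ) :=
  {v | ∀ x ∈ K, ∀ t : ℝ, 0 ≤ t → x + t • v ∈ K}

/-- The projection `π_n : ℝ^n → ℝ^n`, `(x₁,…,x_n) ↦ (x₁,…,x_{n-1},0)`. -/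
def projLast (n : ℕ) (x : Fin n → ℝ) : Fin n → ℝ :=
  fun i => if (i : ℕ) = n - 1 then 0 else x i

/-- The set `A_K`, realized inside the hyperplane `{x_n = 0}` of `ℝ^n`:
points `y = (a,0)` such that the fiber `I_a = π_n⁻¹(a,0) ∩ K` is nonempty
but does not contain `(a,0)`. -/
def AKset (n : ℕ) (K : Set (Fin n → ℝ)) : Set (Fin n → ℝ) :=
  {y | (∀ i : Fin n, (i : ℕ) = n - 1 → y i = 0) ∧
    ({x | projLast n x = y} ∩ K).Nonempty ∧ y ∉ K}

/-- `K` is in first trimming position with respect to its facet `F`. -/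
def FirstTrimmingPosition (n : ℕ) (K F : Set (Fin n → ℝ)) : Prop :=
  IsFacetOf n K F ∧
  (∀ x ∈ F, ∀ i : Fin n, (i : ℕ) = n - 2 → x i = 0) ∧
  (∀ x ∈ K, ∀ i : Fin n, (i : ℕ) = n - 2 → x i ≤ 0) ∧
  (∀ y : Fin n → ℝ, IsBounded ({x | projLast n x = y} ∩ K)) ∧
  IsBounded (AKset n K)

/-- `K` is in second trimming position with respect to its facet `F`. -/
def SecondTrimmingPosition (n : ℕ) (K F : Set (Fin n → ℝ)) : Prop :=
  IsFacetOf n K F ∧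
  (∀ x ∈ F, ∀ i : Fin n, (i : ℕ) = n - 1 → x i = 0) ∧
  (∀ x ∈ K, ∀ i : Fin n, (i : ℕ) = n - 1 → x i ≤ 0) ∧
  IsBounded (AKset n K)

/-- A polynomial map `ℝ^n → ℝ^m`: each component is given by a polynomial. -/
def IsPolynomialMap (n m : ℕ) (f : (Fin n → ℝ) → (Fin m → ℝ)) : Prop :=
  ∃ p : Fin m → MvPolynomial (Fin n) ℝ, ∀ x i, f x i = MvPolynomial.eval x (p i)

section Aux

/-!
The unbounded edge `A` is a closed convex unbounded subset of a line, and it contains no full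
line because `K` has a vertex; so `A` is a ray `q + ℝ≥0 w`. Its endpoint `q` is an extreme point
of the face `A`, hence of `K`, hence a vertex of the polyhedron `K`, so `q` lies strictly below
the sawing hyperplane `Π = {L + c = 0}` while `p ∈ A ∩ Π`; thus `L w > 0`.

The functional `M = L(w) g - g(w) L` kills `w` and is constant on `W`, so `{M = M q}` is the
affine span of `W ∪ A`. On the slice `K ∩ Π` we have `M - M q = L(w) (g + d) ≤ 0`. Every other
point of `K` is joined, by a segment crossing `Π`, to a point of the ray on the other side of `Π`
(the vertex `q`, or a far point of the ray) at which `M - M q` vanishes; convexity of `K` puts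
the crossing point in the slice, which forces `M - M q ≤ 0` at the original point.
-/

open Set

theorem IsConvexPolyhedron.convex {n : ℕ} {K : Set (Fin n → ℝ)} (hK : IsConvexPolyhedron n K) :
    Convex ℝ K := by
  obtain ⟨m, L, c, -, rfl⟩ := hK
  simpa only [ofPred_forall] using convex_iInter fun i => convex_halfSpace_le (L i).isLinear (c i)

theorem IsConvexPolyhedron.isClosed {n : ℕ} {K : Set (Fin n → ℝ)} (hK : IsConvexPolyhedron n K) :
    IsClosed K := by
  obtain ⟨m, L, c, -, rfl⟩ := hK
  simpa only [ofPred_forall] using isClosed_iInter fun i =>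
    isClosed_le (L i).continuous_of_finiteDimensional continuous_const

theorem IsFaceOf.subset {n : ℕ} {K F : Set (Fin n → ℝ)} (hF : IsFaceOf n K F) : F ⊆ K := by
  obtain ⟨L, c, -, -, -, rfl⟩ := hF
  exact inter_subset_left

theorem IsFaceOf.isExtreme {n : ℕ} {K F : Set (Fin n → ℝ)} (hF : IsFaceOf n K F) :
    IsExtreme ℝ K F := by
  obtain ⟨L, c, -, -, hle, rfl⟩ := hF
  refine ⟨inter_subset_left, fun x₁ hx₁ x₂ hx₂ x ⟨_, hx⟩ ⟨a, b, ha, hb, hab, hx₁₂⟩ => ?_⟩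
  subst hx₁₂
  have h₁ := hle x₁ hx₁
  have h₂ := hle x₂ hx₂
  simp only [mem_ofPred_eq, map_add, map_smul, smul_eq_mul] at hx
  have hc : a * c + b * c = c := by rw [← add_mul, hab, one_mul]
  have : a * c ≤ a * L x₁ := by linarith [mul_le_mul_of_nonneg_left h₂ hb.le]
  exact ⟨hx₁, le_antisymm h₁ (le_of_mul_le_mul_left this ha)⟩

theorem IsVertexOf.mem_extremePoints {n : ℕ} {K : Set (Fin n → ℝ)} {v : Fin n → ℝ}
    (hv : IsVertexOf n K v) : v ∈ K.extremePoints ℝ :=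
  isExtreme_singleton.1 (IsFaceOf.isExtreme hv)

theorem mem_extremePoints_ray {E : Type*} [AddCommGroup E] [Module ℝ E] (q w : E) :
    q ∈ {x | ∃ t : ℝ, 0 ≤ t ∧ x = q + t • w}.extremePoints ℝ := by
  refine ⟨⟨0, le_rfl, by simp⟩, ?_⟩
  rintro _ ⟨s, hs, rfl⟩ _ ⟨t, ht, rfl⟩ ⟨a, b, ha, hb, hab, h⟩
  have : (a * s + b * t) • w = 0 := by
    calc (a * s + b * t) • w = a • (q + s • w) + b • (q + t • w) - (a + b) • q := by module
      _ = 0 := by rw [h, hab, one_smul, sub_self]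
  rcases smul_eq_zero.1 this with h0 | h0
  · have : s = 0 := by nlinarith
    simp [this]
  · simp [h0]

theorem eventually_forall_apply_add_smul_le {n m : ℕ} {L : Fin m → (Fin n → ℝ) →ₗ[ℝ] ℝ}
    {c : Fin m → ℝ} {q v : Fin n → ℝ} (hq : ∀ i, L i q ≤ c i)
    (hv : ∀ i, L i q = c i → L i v = 0) :
    ∀ᶠ t in nhds (0 : ℝ), ∀ i, L i (q + t • v) ≤ c i := by
  refine Filter.eventually_all.2 fun i => ?_
  simp only [map_add, map_smul, smul_eq_mul]
  rcases (hq i).lt_or_eq with hlt | heq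
  · have : Continuous fun t : ℝ => L i q + t * L i v := by fun_prop
    simpa using (this.tendsto 0).eventually (gt_mem_nhds (by simpa using hlt)) |>.mono
      fun _ => le_of_lt
  · simp [hv i heq, heq]

theorem eq_zero_of_add_smul_mem_of_sub_smul_mem {E : Type*} [AddCommGroup E] [Module ℝ E]
    {A : Set E} {q v : E} (hq : q ∈ A.extremePoints ℝ) {t : ℝ} (ht : t ≠ 0)
    (h₁ : q + t • v ∈ A) (h₂ : q - t • v ∈ A) : v = 0 := by
  have hseg : q ∈ openSegment ℝ (q + t • v) (q - t • v) :=
    ⟨1 / 2, 1 / 2, by norm_num, by norm_num, by norm_num, by module⟩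
  have := hq.2 h₁ h₂ hseg
  simpa [ht] using this

theorem IsConvexPolyhedron.isVertexOf_of_mem_extremePoints {n : ℕ} {K : Set (Fin n → ℝ)}
    (hK : IsConvexPolyhedron n K) {q : Fin n → ℝ} (hq : q ∈ K.extremePoints ℝ)
    (hKq : ¬ K ⊆ {q}) : IsVertexOf n K q := by
  classical
  obtain ⟨m, L, c, -, rfl⟩ := hK
  -- The sum of the constraints active at `q` exposes `q`: at any other point `x` of the exposed
  -- face these constraints are still tight, so `q` can move both ways along `x - q` inside `K`.
  set S := Finset.univ.filter fun i => L i q = c i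
  have hsum : ∀ x, (∑ i ∈ S, L i) x = ∑ i ∈ S, L i x := fun x => LinearMap.sum_apply _ _ _
  have hle : ∀ x ∈ {x | ∀ i, L i x ≤ c i}, (∑ i ∈ S, L i) x ≤ ∑ i ∈ S, c i := fun x hx => by
    simpa only [hsum] using Finset.sum_le_sum fun i _ => hx i
  have hqS : (∑ i ∈ S, L i) q = ∑ i ∈ S, c i := by
    simpa only [hsum] using Finset.sum_congr rfl fun i hi => (Finset.mem_filter.1 hi).2
  have hface : {q} = {x | ∀ i, L i x ≤ c i} ∩ {x | (∑ i ∈ S, L i) x = ∑ i ∈ S, c i} := by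
    refine Subset.antisymm (singleton_subset_iff.2 ⟨hq.1, hqS⟩) ?_
    rintro x ⟨hx, hxS⟩
    have htight : ∀ i ∈ S, L i x = c i :=
      (Finset.sum_eq_sum_iff_of_le fun i _ => hx i).1 (by rw [← hsum]; exact hxS)
    have hloc := eventually_forall_apply_add_smul_le (v := x - q) hq.1 fun i hi => by
      rw [map_sub, htight i (Finset.mem_filter.2 ⟨Finset.mem_univ i, hi⟩), hi, sub_self]
    have hloc' := (continuous_neg.tendsto' (0 : ℝ) 0 neg_zero).eventually hloc
    obtain ⟨t, ⟨h₁, h₂⟩, ht⟩ :=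
      (((hloc.and hloc').filter_mono nhdsWithin_le_nhds).and self_mem_nhdsWithin).exists
        (f := nhdsWithin (0 : ℝ) {0}ᶜ)
    have := eq_zero_of_add_smul_mem_of_sub_smul_mem hq ht h₁ fun i => by
      simpa only [neg_smul, ← sub_eq_add_neg] using h₂ i
    exact sub_eq_zero.1 this
  refine ⟨∑ i ∈ S, L i, ∑ i ∈ S, c i, fun h0 => hKq ?_, ⟨q, hq.1, hqS⟩, hle, hface⟩
  rw [h0, LinearMap.zero_apply] at hqS
  rw [hface, h0, ← hqS]
  exact fun x hx => ⟨hx, rfl⟩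

theorem IsConvexPolyhedron.eq_zero_of_forall_add_smul_mem {n : ℕ} {K : Set (Fin n → ℝ)}
    (hK : IsConvexPolyhedron n K) {v : Fin n → ℝ} (hv : IsVertexOf n K v) {x w : Fin n → ℝ}
    (hline : ∀ t : ℝ, x + t • w ∈ K) : w = 0 := by
  obtain ⟨m, L, c, -, rfl⟩ := hK
  have hLw : ∀ i, L i w = 0 := fun i => by
    by_contra h
    have := hline ((c i - L i x + 1) / L i w) i
    rw [map_add, map_smul, smul_eq_mul, div_mul_cancel₀ _ h] at this
    linarith
  have hvK : ∀ s : ℝ, v + s • w ∈ {x | ∀ i, L i x ≤ c i} := fun s i => by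
    simpa [hLw i] using hv.mem_extremePoints.1 i
  exact eq_zero_of_add_smul_mem_of_sub_smul_mem hv.mem_extremePoints one_ne_zero (hvK 1)
    (by simpa [sub_eq_add_neg] using hvK (-1))

theorem Set.OrdConnected.eq_Ici_csInf {T : Set ℝ} (hT : T.OrdConnected) (hclosed : IsClosed T)
    (hne : T.Nonempty) (hbdd : BddBelow T) (hunb : ¬ BddAbove T) : T = Ici (sInf T) := by
  refine Subset.antisymm (fun t ht => csInf_le hbdd ht) fun t ht => ?_
  obtain ⟨t', ht', htt'⟩ := not_bddAbove_iff.1 hunb t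
  exact hT.out (hclosed.csInf_mem hne hbdd) ht' ⟨ht, htt'.le⟩

section Ray

variable {E : Type*} [NormedAddCommGroup E] [NormedSpace ℝ E]

theorem exists_eq_ray_of_bddBelow {A : Set E} {p v : E} (hAv : ∀ x ∈ A, ∃ t : ℝ, x = p + t • v)
    (hT : IsClosed {t : ℝ | p + t • v ∈ A}) (hconv : Convex ℝ {t : ℝ | p + t • v ∈ A})
    (hne : A.Nonempty) (hbdd : BddBelow {t : ℝ | p + t • v ∈ A})
    (hunb : ¬ BddAbove {t : ℝ | p + t • v ∈ A}) :
    ∃ q, A = {x | ∃ t : ℝ, 0 ≤ t ∧ x = q + t • v} := by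
  set T := {t : ℝ | p + t • v ∈ A}
  obtain ⟨x, hx⟩ := hne
  obtain ⟨t, rfl⟩ := hAv x hx
  obtain ⟨a, hTeq⟩ : ∃ a, T = Ici a := ⟨_, hconv.ordConnected.eq_Ici_csInf hT ⟨t, hx⟩ hbdd hunb⟩
  refine ⟨p + a • v, Subset.antisymm (fun y hy => ?_) ?_⟩
  · obtain ⟨s, rfl⟩ := hAv y hy
    have hs : a ≤ s := by rw [← mem_Ici, ← hTeq]; exact hy
    exact ⟨s - a, sub_nonneg.2 hs, by module⟩
  · rintro _ ⟨s, hs, rfl⟩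
    have : a + s ∈ T := by rw [hTeq]; exact le_add_of_nonneg_right hs
    rwa [add_assoc, ← add_smul]

theorem Collinear.exists_eq_ray {A : Set E} (hA : Collinear ℝ A) (hconv : Convex ℝ A)
    (hclosed : IsClosed A) (hunb : ¬ IsBounded A)
    (hline : ∀ x w : E, (∀ t : ℝ, x + t • w ∈ A) → w = 0) :
    ∃ q w, w ≠ 0 ∧ A = {x | ∃ t : ℝ, 0 ≤ t ∧ x = q + t • w} := by
  obtain ⟨p, hp⟩ : A.Nonempty := nonempty_iff_ne_empty.2 fun h => hunb (h ▸ isBounded_empty)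
  obtain ⟨v, hv⟩ := (collinear_iff_of_mem hp).1 hA
  have hAv : ∀ x ∈ A, ∃ t : ℝ, x = p + t • v := fun x hx => by
    obtain ⟨t, rfl⟩ := hv x hx
    exact ⟨t, add_comm _ _⟩
  have hT : ∀ u : E, IsClosed {t : ℝ | p + t • u ∈ A} := fun u => hclosed.preimage (by fun_prop)
  have hconvT : ∀ u : E, Convex ℝ {t : ℝ | p + t • u ∈ A} := fun u s hs t ht a b ha hb hab => by
    show p + (a * s + b * t) • u ∈ A
    convert hconv hs ht ha hb hab using 1
    linear_combination (norm := module) -(hab • p)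
  have hv0 : v ≠ 0 := by
    rintro rfl
    refine hunb ((isBounded_singleton (x := p)).subset fun x hx => ?_)
    obtain ⟨t, rfl⟩ := hAv x hx
    simp
  set T := {t : ℝ | p + t • v ∈ A}
  by_cases hb : BddBelow T <;> by_cases ha : BddAbove T
  · obtain ⟨a, hlow⟩ := hb
    obtain ⟨b, hup⟩ := ha
    refine absurd (((isCompact_Icc (a := a) (b := b)).image (f := fun t : ℝ => p + t • v)
      (by fun_prop)).isBounded.subset fun x hx => ?_) hunb
    obtain ⟨t, rfl⟩ := hAv x hx
    exact ⟨t, ⟨hlow hx, hup hx⟩, rfl⟩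
  · obtain ⟨q, hq⟩ := exists_eq_ray_of_bddBelow hAv (hT v) (hconvT v) ⟨p, hp⟩ hb ha
    exact ⟨q, v, hv0, hq⟩
  · have hTneg : {t : ℝ | p + t • -v ∈ A} = -T := by
      ext t
      simp [T, smul_neg, neg_smul]
    have hAv' : ∀ x ∈ A, ∃ t : ℝ, x = p + t • -v := fun x hx => by
      obtain ⟨t, rfl⟩ := hAv x hx
      exact ⟨-t, by rw [neg_smul_neg]⟩
    obtain ⟨q, hq⟩ := exists_eq_ray_of_bddBelow hAv' (hT (-v)) (hconvT (-v)) ⟨p, hp⟩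
      (hTneg ▸ bddBelow_neg.2 ha) (hTneg ▸ mt bddAbove_neg.1 hb)
    exact ⟨q, -v, neg_ne_zero.2 hv0, hq⟩
  · refine absurd (hline p v fun t => ?_) hv0
    obtain ⟨t₁, ht₁, h₁⟩ := not_bddBelow_iff.1 hb t
    obtain ⟨t₂, ht₂, h₂⟩ := not_bddAbove_iff.1 ha t
    exact (hconvT v).ordConnected.out ht₁ ht₂ ⟨h₁.le, h₂.le⟩

end Ray

theorem IsConvexPolyhedron.exists_isUnboundedEdgeWithDir {n : ℕ} {K A : Set (Fin n → ℝ)}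
    (hK : IsConvexPolyhedron n K) (hv : ∃ v, IsVertexOf n K v) (hA : IsEdgeOf n K A)
    (hAu : ¬ IsBounded A) : ∃ w, IsUnboundedEdgeWithDir n K A w := by
  obtain ⟨⟨f, b, -, -, -, hAeq⟩, hdim⟩ := id hA
  have hAK : A ⊆ K := hA.1.subset
  have hcol : Collinear ℝ A :=
    collinear_iff_finrank_le_one.2 (by rw [← direction_affineSpan]; exact hdim.le)
  have hconv : Convex ℝ A := hAeq ▸ hK.convex.inter (convex_hyperplane f.isLinear b)
  have hclosed : IsClosed A :=
    hAeq ▸ hK.isClosed.inter (isClosed_eq f.continuous_of_finiteDimensional continuous_const)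
  obtain ⟨v, hv⟩ := hv
  obtain ⟨q, w, hw, hAray⟩ := hcol.exists_eq_ray hconv hclosed hAu fun x w h =>
    hK.eq_zero_of_forall_add_smul_mem hv fun t => hAK (h t)
  have hqA : q ∈ A.extremePoints ℝ := hAray ▸ mem_extremePoints_ray q w
  have hqK := hA.1.isExtreme.extremePoints_subset_extremePoints hqA
  have hKq : ¬ K ⊆ {q} := fun h => hAu ((isBounded_singleton (x := q)).subset (hAK.trans h))
  exact ⟨w, hA, hAu, hw, q, hK.isVertexOf_of_mem_extremePoints hqK hKq, hAray⟩

section Support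

variable {E : Type*} [AddCommGroup E] [Module ℝ E] {K : Set E} {φ ψ : E →ᵃ[ℝ] ℝ}

theorem Convex.nonpos_of_nonpos_on_zero_set (hK : Convex ℝ K)
    (hψ : ∀ x ∈ K, φ x = 0 → ψ x ≤ 0) {y z : E} (hy : y ∈ K) (hz : z ∈ K)
    (hφy : φ y < 0) (hφz : 0 < φ z) (hψy : ψ y = 0) : ψ z ≤ 0 := by
  set μ := φ y / (φ y - φ z)
  have hμ : μ ∈ Ioo (0 : ℝ) 1 :=
    ⟨div_pos_of_neg_of_neg hφy (by linarith), (div_lt_one_of_neg (by linarith)).2 (by linarith)⟩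
  have hx := hψ _ (hK.lineMap_mem hy hz (Ioo_subset_Icc_self hμ)) (by
    rw [AffineMap.apply_lineMap, AffineMap.lineMap_apply_ring']
    linear_combination -(div_mul_cancel₀ (φ y) (by linarith : φ y - φ z ≠ 0)))
  rw [AffineMap.apply_lineMap, AffineMap.lineMap_apply_ring', hψy, sub_zero, add_zero] at hx
  exact nonpos_of_mul_nonpos_right hx hμ.1

theorem Convex.forall_nonpos_of_nonpos_on_zero_set (hK : Convex ℝ K)
    (hψ : ∀ x ∈ K, φ x = 0 → ψ x ≤ 0) {y₁ y₂ : E} (hy₁ : y₁ ∈ K) (hy₂ : y₂ ∈ K)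
    (hφ₁ : φ y₁ < 0) (hφ₂ : 0 < φ y₂) (hψ₁ : ψ y₁ = 0) (hψ₂ : ψ y₂ = 0) :
    ∀ z ∈ K, ψ z ≤ 0 := by
  intro z hz
  rcases lt_trichotomy (φ z) 0 with h | h | h
  · refine hK.nonpos_of_nonpos_on_zero_set (φ := -φ) (fun x hx hφx => hψ x hx ?_) hy₂ hz
      (by simpa using hφ₂) (by simpa using h) hψ₂
    simpa using hφx
  · exact hψ z hz h
  · exact hK.nonpos_of_nonpos_on_zero_set hψ hy₁ hz hφ₁ h hψ₁

end Support

section EdgeFunctional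

variable {E : Type*} [AddCommGroup E] [Module ℝ E] (L g : E →ₗ[ℝ] ℝ) (w : E)

/-- The functional vanishing on `w` and on `ker L ∩ ker g`. -/
def edgeFunctional : E →ₗ[ℝ] ℝ := L w • g - g w • L

variable {L g w}

theorem edgeFunctional_apply (x : E) : edgeFunctional L g w x = L w * g x - g w * L x := by
  simp [edgeFunctional]

theorem edgeFunctional_apply_self : edgeFunctional L g w w = 0 := by
  rw [edgeFunctional_apply, mul_comm, sub_self]

theorem edgeFunctional_ne_zero (hind : LinearIndependent ℝ ![L, g]) (hLw : L w ≠ 0) :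
    edgeFunctional L g w ≠ 0 := fun h =>
  hLw (LinearIndependent.pair_iff.1 hind (-g w) (L w) (by rw [← h, edgeFunctional]; module)).2

variable {c d : ℝ} {q : E} {t₀ : ℝ}

theorem edgeFunctional_sub_apply (hp : q + t₀ • w ∈ {x | L x + c = 0 ∧ g x + d = 0}) (x : E) :
    edgeFunctional L g w x - edgeFunctional L g w q = L w * (g x + d) - g w * (L x + c) := by
  have hp' : L q + t₀ * L w + c = 0 ∧ g q + t₀ * g w + d = 0 := by simpa using hp
  rw [edgeFunctional_apply, edgeFunctional_apply]
  linear_combination g w * hp'.1 - L w * hp'.2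

theorem affineSpan_union_ray_eq (hLw : L w ≠ 0)
    (hp : q + t₀ • w ∈ {x | L x + c = 0 ∧ g x + d = 0}) :
    (affineSpan ℝ ({x | L x + c = 0 ∧ g x + d = 0} ∪ {x | ∃ t : ℝ, 0 ≤ t ∧ x = q + t • w}) :
      Set E) = {x | edgeFunctional L g w x = edgeFunctional L g w q} := by
  have hM := edgeFunctional_sub_apply hp
  set M := edgeFunctional L g w
  set S := affineSpan ℝ ({x | L x + c = 0 ∧ g x + d = 0} ∪ {x | ∃ t : ℝ, 0 ≤ t ∧ x = q + t • w})
  refine Subset.antisymm ?_ fun x hx => ?_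
  · have : S ≤ AffineSubspace.mk' q (LinearMap.ker M) := by
      refine affineSpan_le.2 (union_subset (fun x ⟨hxL, hxg⟩ => ?_) ?_)
      · simp [AffineSubspace.mem_mk', hM, hxL, hxg]
      · rintro _ ⟨t, -, rfl⟩
        simp [AffineSubspace.mem_mk', M, edgeFunctional_apply_self]
    exact fun x hx => sub_eq_zero.1 (by simpa [AffineSubspace.mem_mk'] using this hx)
  · have hw : w ∈ S.direction := by
      have hq : q ∈ S := subset_affineSpan ℝ _ (Or.inr ⟨0, le_rfl, by simp⟩)
      have hqw : q + w ∈ S := subset_affineSpan ℝ _ (Or.inr ⟨1, zero_le_one, by simp⟩)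
      simpa using AffineSubspace.vsub_mem_direction hqw hq
    set s := (L x + c) / L w
    have hLy : L (x - s • w) + c = 0 := by
      rw [map_sub, map_smul, smul_eq_mul, div_mul_cancel₀ _ hLw]
      ring
    have hy : g (x - s • w) + d = 0 := by
      have hMy := hM (x - s • w)
      rw [map_sub, map_smul, edgeFunctional_apply_self, smul_zero, sub_zero, hLy, mul_zero,
        sub_zero, show M x = M q from hx, sub_self] at hMy
      exact (mul_eq_zero.1 hMy.symm).resolve_left hLw
    simpa using AffineSubspace.vadd_mem_of_mem_direction (S.direction.smul_mem s hw)
      (subset_affineSpan ℝ _ (Or.inl ⟨hLy, hy⟩))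

theorem forall_edgeFunctional_le {K : Set E} (hK : Convex ℝ K)
    (hside : ∀ x ∈ K ∩ {x | L x + c = 0}, g x + d ≤ 0)
    (hray : {x | ∃ t : ℝ, 0 ≤ t ∧ x = q + t • w} ⊆ K) (hLw : 0 < L w) (hq : L q + c < 0)
    (ht₀ : 0 ≤ t₀) (hp : q + t₀ • w ∈ {x | L x + c = 0 ∧ g x + d = 0}) :
    ∀ x ∈ K, edgeFunctional L g w x ≤ edgeFunctional L g w q := by
  have hM := edgeFunctional_sub_apply hp
  have hp' : L q + t₀ * L w + c = 0 := by simpa using hp.1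
  set M := edgeFunctional L g w
  -- `q` and its mirror image `q + 2 t₀ w` in `p` lie on the ray on opposite sides of `{L + c = 0}`
  have key := hK.forall_nonpos_of_nonpos_on_zero_set
    (φ := L.toAffineMap + AffineMap.const ℝ _ c) (ψ := M.toAffineMap - AffineMap.const ℝ _ (M q))
    (y₁ := q) (y₂ := q + (2 * t₀) • w)
  simp only [AffineMap.coe_add, AffineMap.coe_sub, Pi.add_apply, Pi.sub_apply,
    LinearMap.coe_toAffineMap, AffineMap.const_apply] at key
  refine fun x hx => sub_nonpos.1 (key (fun x hx hx0 => ?_) (hray ⟨0, le_rfl, by simp⟩)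
    (hray ⟨2 * t₀, by positivity, rfl⟩) hq ?_ (sub_self _) ?_ x hx)
  · rw [hM, hx0, mul_zero, sub_zero]
    exact mul_nonpos_of_nonneg_of_nonpos hLw.le (hside x ⟨hx, hx0⟩)
  · simp only [map_add, map_smul, smul_eq_mul]
    linarith
  · simp [M, edgeFunctional_apply_self]

end EdgeFunctional

theorem affineSpan_of_support_and_edge_is_supporting_hyperplane_general
    (n : ℕ) (K : Set (Fin n → ℝ))
    (hpoly : IsConvexPolyhedron n K)
    (hnd : ∃ p, IsVertexOf n K p)
    (L : (Fin n → ℝ) →ₗ[ℝ] ℝ) (c : ℝ)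
    (hsaw2 : ∀ p, IsVertexOf n K p → L p + c < 0)
    (g : (Fin n → ℝ) →ₗ[ℝ] ℝ) (d : ℝ) (hind : LinearIndependent ℝ ![L, g])
    (W : Set (Fin n → ℝ)) (hW : W = {x | L x + c = 0 ∧ g x + d = 0})
    (hside : ∀ x ∈ K ∩ {x | L x + c = 0}, g x + d ≤ 0)
    (p : Fin n → ℝ) (hpW : p ∈ W)
    (A : Set (Fin n → ℝ)) (hAe : IsEdgeOf n K A) (hAu : ¬ IsBounded A)
    (hAp : A ∩ {x | L x + c = 0} = {p}) :
    ∃ (M : (Fin n → ℝ) →ₗ[ℝ] ℝ) (e : ℝ), M ≠ 0 ∧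
      (affineSpan ℝ (W ∪ A) : Set (Fin n → ℝ)) = {x | M x = e} ∧
      (∀ x ∈ K, M x ≤ e) ∧ (K ∩ {x | M x = e}).Nonempty := by
  obtain ⟨w, -, -, -, q, hqv, rfl⟩ := hpoly.exists_isUnboundedEdgeWithDir hnd hAe hAu
  subst hW
  have hAK := hAe.1.subset
  obtain ⟨⟨t₀, ht₀, rfl⟩, hpsaw⟩ : p ∈ {x | ∃ t : ℝ, 0 ≤ t ∧ x = q + t • w} ∩ {x | L x + c = 0} :=
    hAp ▸ rfl
  have hq := hsaw2 q hqv
  have hLw : 0 < L w := by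
    simp only [mem_ofPred_eq, map_add, map_smul, smul_eq_mul] at hpsaw
    nlinarith
  exact ⟨edgeFunctional L g w, _, edgeFunctional_ne_zero hind hLw.ne',
    affineSpan_union_ray_eq hLw.ne' hpW,
    forall_edgeFunctional_le hpoly.convex hside hAK hLw hq ht₀ hpW,
    q, hAK ⟨0, le_rfl, by simp⟩, rfl⟩

/-- Lemma 1.5: let `K` be in FU-position with sawing hyperplane `Π = {x | L x + c = 0}`,
let `W ⊆ Π` be an affine subspace of dimension `n - 2` supporting `P := K ∩ Π` inside
`Π`, let `p ∈ W ∩ P` be a vertex of `P` and let `A` be an unbounded edge of `K` with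
`A ∩ Π = {p}`. Then the affine span of `W ∪ A` is a supporting hyperplane of `K`. -/
theorem affineSpan_of_support_and_edge_is_supporting_hyperplane
    (n : ℕ) (K : Set (Fin n → ℝ))
    (hpoly : IsConvexPolyhedron n K) (hdim : polyDim n K = n)
    (hnd : ∃ p, IsVertexOf n K p) (hunb : ¬ IsBounded K)
    (L : (Fin n → ℝ) →ₗ[ℝ] ℝ) (hL : L ≠ 0) (c : ℝ)
    (hsaw1 : ∀ A : Set (Fin n → ℝ), IsEdgeOf n K A → ¬ IsBounded A →
      (A ∩ {x | L x + c = 0}).Nonempty)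
    (hsaw2 : ∀ p, IsVertexOf n K p → L p + c < 0)
    (g : (Fin n → ℝ) →ₗ[ℝ] ℝ) (d : ℝ) (hind : LinearIndependent ℝ ![L, g])
    (W : Set (Fin n → ℝ)) (hW : W = {x | L x + c = 0 ∧ g x + d = 0})
    (hside : ∀ x ∈ K ∩ {x | L x + c = 0}, g x + d ≤ 0)
    (p : Fin n → ℝ) (hpW : p ∈ W)
    (hpv : IsVertexOf n (K ∩ {x | L x + c = 0}) p)
    (A : Set (Fin n → ℝ)) (hAe : IsEdgeOf n K A) (hAu : ¬ IsBounded A)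
    (hAp : A ∩ {x | L x + c = 0} = {p}) :
    ∃ (M : (Fin n → ℝ) →ₗ[ℝ] ℝ) (e : ℝ), M ≠ 0 ∧
      (affineSpan ℝ (W ∪ A) : Set (Fin n → ℝ)) = {x | M x = e} ∧
      (∀ x ∈ K, M x ≤ e) ∧ (K ∩ {x | M x = e}).Nonempty :=
  affineSpan_of_support_and_edge_is_supporting_hyperplane_general n K hpoly hnd L c hsaw2 g d hind W
    hW hside p hpW A hAe hAu hAp
end Aux
end

section
/- Let K ⊂ ℝ^n be an n-dimensional non-degenerate unbounded convex polyhedron in FU-position with respect to ker(ĥ), and suppose its recession cone rec(K) has nonempty topological interior. Let v be an interior point of rec(K) and let G ⊂ ℝ^n be a finite set. Then there exists an affine-linear function h with linear part ĥ such that, setting Π := {h = 0}, for every p ∈ G the set {p + t·v : t ≥ 0} ∩ (K ∩ Π) is a singleton. -/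
/-!
Everything rests on `L v ≠ 0`. Granting it, a ray `p + ℝ≥0 v` meets each level set of `L` at
most once, and since `v` is interior to the recession cone every such ray eventually stays in
`K`; a level set far enough along `v` therefore works for the finitely many `p ∈ G`.

If `L v = 0`, perturbing `v` inside the recession cone gives a recession direction on which `L`
is negative. Pushing points to the boundary until their active constraints cut out as little as
possible, first on the slice `{L ≤ -1}` of the recession cone and then on `K`, yields an extreme
direction `u` with `L u < 0` and a vertex `q` such that `q + ℝ≥0 u` is an unbounded edge. Along
this edge `L + c₀` stays negative, so it never reaches the sawing hyperplane.
-/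

open Bornology Pointwise

open Filter Topology

def closedRay {E : Type*} [AddCommGroup E] [Module ℝ E] (p v : E) : Set E :=
  {x | ∃ t : ℝ, 0 ≤ t ∧ x = p + t • v}

def IsSawingHyperplane (n : ℕ) (K : Set (Fin n → ℝ)) (L : (Fin n → ℝ) →ₗ[ℝ] ℝ) (c : ℝ) :
    Prop :=
  (∀ A : Set (Fin n → ℝ), IsEdgeOf n K A → ¬ IsBounded A → (A ∩ {x | L x + c = 0}).Nonempty) ∧
    ∀ p, IsVertexOf n K p → L p + c < 0

section Interior

variable {E : Type*} [AddCommGroup E] [Module ℝ E] [TopologicalSpace E]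
  [ContinuousAdd E] [ContinuousSMul ℝ E]

theorem eventually_add_smul_mem_of_mem_interior {S : Set E} {v : E} (hv : v ∈ interior S)
    (z : E) : ∀ᶠ t : ℝ in 𝓝 0, v + t • z ∈ S := by
  have : Tendsto (fun t : ℝ => v + t • z) (𝓝 0) (𝓝 v) := by
    simpa using tendsto_const_nhds.add ((tendsto_id (x := 𝓝 (0 : ℝ))).smul_const z)
  exact this.eventually (mem_interior_iff_mem_nhds.mp hv)

theorem exists_apply_lt_of_mem_interior {S : Set E} {v : E} {L : E →ₗ[ℝ] ℝ} (hL : L ≠ 0)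
    (hv : v ∈ interior S) : ∃ w ∈ S, L w < L v := by
  obtain ⟨z, hz⟩ : ∃ z, L z < 0 := by
    obtain ⟨z, hz⟩ := DFunLike.ne_iff.mp hL
    rcases (show L z ≠ 0 from hz).lt_or_gt with h | h
    · exact ⟨z, h⟩
    · exact ⟨-z, by simpa using h⟩
  obtain ⟨t, ht, htpos⟩ := ((eventually_add_smul_mem_of_mem_interior hv z).filter_mono
    nhdsWithin_le_nhds |>.and (self_mem_nhdsWithin : Set.Ioi (0 : ℝ) ∈ 𝓝[>] 0)).exists
  refine ⟨_, ht, ?_⟩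
  simpa using mul_neg_of_pos_of_neg (Set.mem_Ioi.mp htpos) hz

theorem eq_zero_of_zero_mem_interior {S : Set E} (hS : ∀ z ∈ S, -z ∈ S → z = 0)
    (h0 : (0 : E) ∈ interior S) (z : E) : z = 0 := by
  obtain ⟨ε, hε, hball⟩ := Metric.eventually_nhds_iff.mp
    (eventually_add_smul_mem_of_mem_interior h0 z)
  have hpos := hball (y := ε / 2) (by rw [Real.dist_0_eq_abs, abs_of_pos (by positivity)]; linarith)
  have hneg := hball (y := -(ε / 2)) (by
    rw [Real.dist_0_eq_abs, abs_neg, abs_of_pos (by positivity)]; linarith)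
  rw [zero_add] at hpos hneg
  have := hS _ hpos (by rwa [← neg_smul])
  exact (smul_eq_zero.mp this).resolve_left (by positivity)

end Interior

section Polyhedron

variable {ι E : Type*} [AddCommGroup E] [Module ℝ E]

def polyhedron (A : ι → E →ₗ[ℝ] ℝ) (b : ι → ℝ) : Set E :=
  {x | ∀ i, A i x ≤ b i}

def kerOn (A : ι → E →ₗ[ℝ] ℝ) (s : Set ι) : Submodule ℝ E :=
  ⨅ i ∈ s, LinearMap.ker (A i)

theorem mem_kerOn {A : ι → E →ₗ[ℝ] ℝ} {s : Set ι} {y : E} :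
    y ∈ kerOn A s ↔ ∀ i ∈ s, A i y = 0 := by
  simp [kerOn]

theorem kerOn_anti {A : ι → E →ₗ[ℝ] ℝ} {s t : Set ι} (hst : s ⊆ t) : kerOn A t ≤ kerOn A s :=
  fun _ hy => mem_kerOn.mpr fun i hi => mem_kerOn.mp hy i (hst hi)

variable [Fintype ι] (A : ι → E →ₗ[ℝ] ℝ) (b : ι → ℝ)

theorem exists_tight_add_smul (x e : E) (he : ∃ i, A i e < 0) :
    ∃ t : ℝ, (∀ i, A i e < 0 → A i (x + t • e) ≤ b i) ∧
      ∃ j, A j e < 0 ∧ A j (x + t • e) = b j := by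
  classical
  set J := Finset.univ.filter fun i => A i e < 0
  have hJ : J.Nonempty := by simpa [J, Finset.filter_nonempty_iff] using he
  obtain ⟨j, hjJ, hj⟩ := Finset.exists_mem_eq_sup' hJ fun i => (b i - A i x) / A i e
  have hjneg : A j e < 0 := (Finset.mem_filter.mp hjJ).2
  refine ⟨J.sup' hJ fun i => (b i - A i x) / A i e, fun i hi => ?_, j, hjneg, ?_⟩
  · have := Finset.le_sup' (fun i => (b i - A i x) / A i e) (by simpa [J] using hi : i ∈ J)
    rw [div_le_iff_of_neg hi] at this
    simp only [map_add, map_smul, smul_eq_mul]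
    linarith
  · simp only [hj, map_add, map_smul, smul_eq_mul, div_mul_cancel₀ _ hjneg.ne]
    ring

theorem exists_mem_polyhedron_activeKer_lt {x e : E} (hx : x ∈ polyhedron A b)
    (he : e ∈ kerOn A {i | A i x = b i}) (hneg : ∃ i, A i e < 0) :
    ∃ y ∈ polyhedron A b, kerOn A {i | A i y = b i} < kerOn A {i | A i x = b i} := by
  obtain ⟨t, ht, j, hj, hjt⟩ := exists_tight_add_smul A b x e hneg
  have happ : ∀ i, A i (x + t • e) = A i x + t * A i e := by simp
  -- `x` is feasible, so reaching the boundary of constraint `j` means moving backwards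
  have ht0 : t ≤ 0 := by
    have := hx j
    rw [happ] at hjt
    nlinarith
  refine ⟨x + t • e, fun i => ?_, lt_of_le_of_ne (kerOn_anti fun i hi => ?_) fun h => ?_⟩
  · rcases lt_or_ge (A i e) 0 with h | h
    · exact ht i h
    · rw [happ]
      nlinarith [hx i]
  · change A i x = b i at hi
    change A i (x + t • e) = b i
    rw [happ, mem_kerOn.mp he i hi, mul_zero, add_zero, hi]
  · have := mem_kerOn.mp (h ▸ he) j hjt
    linarith

theorem exists_mem_polyhedron_activeKer_le_lineality [FiniteDimensional ℝ E] {x : E}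
    (hx : x ∈ polyhedron A b) :
    ∃ y ∈ polyhedron A b, kerOn A {i | A i y = b i} ≤ kerOn A Set.univ := by
  induction hk : Module.finrank ℝ (kerOn A {i | A i x = b i}) using Nat.strong_induction_on
    generalizing x with
  | _ k ih =>
  by_cases hdone : kerOn A {i | A i x = b i} ≤ kerOn A Set.univ
  · exact ⟨x, hx, hdone⟩
  obtain ⟨e, he, he'⟩ := SetLike.not_le_iff_exists.mp hdone
  obtain ⟨i, hi⟩ : ∃ i, A i e ≠ 0 := by simpa [mem_kerOn] using he'
  obtain ⟨y, hy, hlt⟩ : ∃ y ∈ polyhedron A b,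
      kerOn A {i | A i y = b i} < kerOn A {i | A i x = b i} := by
    rcases hi.lt_or_gt with h | h
    · exact exists_mem_polyhedron_activeKer_lt A b hx he ⟨i, h⟩
    · exact exists_mem_polyhedron_activeKer_lt A b hx (neg_mem he) ⟨i, by simpa using h⟩
  exact ih _ (hk ▸ Submodule.finrank_lt_finrank_of_lt hlt) hy rfl

theorem exists_extreme_direction [FiniteDimensional ℝ E] (hpt : kerOn A Set.univ = ⊥)
    {L : E →ₗ[ℝ] ℝ} {w : E} (hw : w ∈ polyhedron A 0) (hLw : L w < 0) :
    ∃ u ∈ polyhedron A 0, L u < 0 ∧ kerOn A {i | A i u = 0} ≤ ℝ ∙ u := by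
  -- on the slice `{L ≤ -1}` of the cone, a point whose active constraints cut out only the
  -- lineality space `⊥` spans an extreme ray
  let A' : Option ι → E →ₗ[ℝ] ℝ := fun o => o.elim L A
  let b' : Option ι → ℝ := fun o => o.elim (-1) 0
  have hw' : (-(L w)⁻¹) • w ∈ polyhedron A' b' := by
    rintro (_ | i)
    · simp [A', b', hLw.ne]
    · simpa [A', b'] using mul_nonpos_of_nonneg_of_nonpos
        (neg_nonneg.mpr (inv_nonpos.mpr hLw.le)) (hw i)
  obtain ⟨u, hu, hker⟩ := exists_mem_polyhedron_activeKer_le_lineality A' b' hw'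
  have hLu : L u < 0 := by have : L u ≤ -1 := hu none; linarith
  refine ⟨u, fun i => hu (some i), hLu, fun y hy => ?_⟩
  have hy' : y - (L y / L u) • u ∈ kerOn A' Set.univ := by
    refine hker (mem_kerOn.mpr ?_)
    rintro (_ | i) hi
    · simp [A', hLu.ne]
    · change A i u = 0 at hi
      simp [A', hi, mem_kerOn.mp hy i hi]
  have : y - (L y / L u) • u ∈ kerOn A Set.univ :=
    mem_kerOn.mpr fun i _ => mem_kerOn.mp hy' (some i) trivial
  rw [hpt, Submodule.mem_bot, sub_eq_zero] at this
  exact this ▸ Submodule.smul_mem _ _ (Submodule.mem_span_singleton_self u)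

theorem exists_tight_of_extreme_direction [FiniteDimensional ℝ E] (hpt : kerOn A Set.univ = ⊥)
    {x u : E} (hx : x ∈ polyhedron A b) (hu : u ∈ polyhedron A 0) (hu0 : u ≠ 0)
    (hext : kerOn A {i | A i u = 0} ≤ ℝ ∙ u) :
    ∃ q ∈ polyhedron A b, (∃ j, A j u < 0 ∧ A j q = b j) ∧
      kerOn A {i | A i u = 0 ∧ A i q = b i} ≤ ℝ ∙ u := by
  classical
  -- first minimise the active kernel of the constraints parallel to `u`, then slide along `u`
  -- until one of the others becomes tight
  let Z := {i // A i u = 0}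
  obtain ⟨x₁, hx₁, hker⟩ :=
    exists_mem_polyhedron_activeKer_le_lineality (fun i : Z => A i) (fun i => b i) (x := x)
      fun i => hx i
  have hneg : ∃ i, A i u < 0 := by
    by_contra! h
    refine hu0 ((Submodule.eq_bot_iff _).mp hpt u (mem_kerOn.mpr fun i _ => ?_))
    exact le_antisymm (hu i) (h i)
  obtain ⟨t, ht, j, hj, hjq⟩ := exists_tight_add_smul A b x₁ u hneg
  have happ : ∀ i, A i u = 0 → A i (x₁ + t • u) = A i x₁ := fun i hi => by simp [hi]
  refine ⟨x₁ + t • u, fun i => ?_, ⟨j, hj, hjq⟩, fun y hy => hext (mem_kerOn.mpr fun i hi => ?_)⟩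
  · rcases (hu i).lt_or_eq with h | h
    · exact ht i h
    · rw [happ i h]
      exact hx₁ ⟨i, h⟩
  · have hZ := hker (mem_kerOn.mpr fun (k : Z) hk => mem_kerOn.mp hy k
      ⟨k.2, (happ k k.2).trans hk⟩)
    exact mem_kerOn.mp hZ ⟨i, hi⟩ trivial

end Polyhedron

theorem not_isBounded_closedRay {E : Type*} [NormedAddCommGroup E] [NormedSpace ℝ E] {q u : E}
    (hu : u ≠ 0) : ¬ IsBounded (closedRay q u) := by
  intro h
  obtain ⟨R, hR⟩ := isBounded_iff_forall_norm_le.mp h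
  have hu' : 0 < ‖u‖ := norm_pos_iff.mpr hu
  set t := (R + ‖q‖ + 1) / ‖u‖
  have ht : 0 ≤ t := by
    have := hR q ⟨0, le_rfl, by simp⟩
    exact div_nonneg (by linarith [norm_nonneg q]) hu'.le
  have hbound := hR (q + t • u) ⟨t, ht, rfl⟩
  have : ‖t • u‖ ≤ ‖q + t • u‖ + ‖q‖ := by
    simpa using norm_sub_le (q + t • u) q
  rw [norm_smul, Real.norm_of_nonneg ht, div_mul_cancel₀ _ hu'.ne'] at this
  linarith

theorem closedRay_inter_eq_singleton {E : Type*} [AddCommGroup E] [Module ℝ E]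
    {L : E →ₗ[ℝ] ℝ} {K : Set E} {p v : E} {c t₀ : ℝ} (hLv : L v ≠ 0) (ht₀ : 0 ≤ t₀)
    (hK : p + t₀ • v ∈ K) (hc : L (p + t₀ • v) + c = 0) :
    closedRay p v ∩ (K ∩ {x | L x + c = 0}) = {p + t₀ • v} := by
  ext x
  constructor
  · rintro ⟨⟨t, -, rfl⟩, -, hx⟩
    simp only [Set.mem_ofPred_eq, map_add, map_smul, smul_eq_mul] at hx hc
    have : (t - t₀) * L v = 0 := by linarith
    rw [Set.mem_singleton_iff, sub_eq_zero.mp ((mul_eq_zero.mp this).resolve_right hLv)]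
  · rintro rfl
    exact ⟨⟨t₀, ht₀, rfl⟩, hK, hc⟩

section FinDim

variable {n : ℕ}

theorem polyDim_closedRay {q u : Fin n → ℝ} (hu : u ≠ 0) : polyDim n (closedRay q u) = 1 := by
  have hq : q ∈ closedRay q u := ⟨0, le_rfl, by simp⟩
  have : vectorSpan ℝ (closedRay q u) = ℝ ∙ u := by
    refine le_antisymm ?_ (Submodule.span_le.mpr (Set.singleton_subset_iff.mpr ?_))
    · rw [vectorSpan_eq_span_vsub_set_right ℝ hq, Submodule.span_le]
      rintro _ ⟨_, ⟨t, -, rfl⟩, rfl⟩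
      simpa using Submodule.smul_mem _ t (Submodule.mem_span_singleton_self u)
    · have h₁ : q + (1 : ℝ) • u ∈ closedRay q u := ⟨1, zero_le_one, rfl⟩
      simpa using vsub_mem_vectorSpan ℝ h₁ hq
  rw [polyDim, direction_affineSpan, this, finrank_span_singleton hu]

theorem eq_zero_of_forall_eq_of_polyDim_eq {K : Set (Fin n → ℝ)} (hdim : polyDim n K = n)
    {M : (Fin n → ℝ) →ₗ[ℝ] ℝ} {c : ℝ} (hM : ∀ x ∈ K, M x = c) : M = 0 := by
  have htop : vectorSpan ℝ K = ⊤ := Submodule.eq_top_of_finrank_eq (by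
    rw [← direction_affineSpan, ← polyDim, hdim, Module.finrank_fin_fun])
  have : vectorSpan ℝ K ≤ LinearMap.ker M := by
    rw [vectorSpan_def, Submodule.span_le]
    rintro _ ⟨x, hx, y, hy, rfl⟩
    simp [hM x hx, hM y hy]
  rwa [htop, top_le_iff, LinearMap.ker_eq_top] at this

theorem IsVertexOf.mem {K : Set (Fin n → ℝ)} {p : Fin n → ℝ} (hp : IsVertexOf n K p) : p ∈ K := by
  obtain ⟨M, c, -, -, -, h⟩ := hp
  exact (h.subset rfl).1

theorem IsVertexOf.eq_zero_of_add_mem_of_sub_mem {K : Set (Fin n → ℝ)} {p z : Fin n → ℝ}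
    (hp : IsVertexOf n K p) (h₁ : p + z ∈ K) (h₂ : p - z ∈ K) : z = 0 := by
  obtain ⟨M, c, -, -, hle, h⟩ := hp
  have hMp : M p = c := (h.subset rfl).2
  have h₁' := hle _ h₁
  have h₂' := hle _ h₂
  rw [map_add] at h₁'
  rw [map_sub] at h₂'
  have hface : p + z ∈ K ∩ {x | M x = c} :=
    ⟨h₁, by simp only [Set.mem_ofPred_eq, map_add]; linarith⟩
  simpa using h.superset hface

theorem IsVertexOf.recCone_pointed {K : Set (Fin n → ℝ)} {p : Fin n → ℝ} (hp : IsVertexOf n K p) :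
    ∀ z ∈ recCone n K, -z ∈ recCone n K → z = 0 := fun z hz hz' =>
  hp.eq_zero_of_add_mem_of_sub_mem (by simpa using hz p hp.mem 1 zero_le_one)
    (by simpa [sub_eq_add_neg] using hz' p hp.mem 1 zero_le_one)

theorem eventually_add_smul_mem_of_mem_interior_recCone {K : Set (Fin n → ℝ)} {v : Fin n → ℝ}
    (hK : K.Nonempty) (hv : v ∈ interior (recCone n K)) (p : Fin n → ℝ) :
    ∀ᶠ t : ℝ in atTop, p + t • v ∈ K := by
  obtain ⟨k, hk⟩ := hK
  -- `p + t • v = k + t • (v + t⁻¹ • (p - k))`, and the bracket tends to `v`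
  filter_upwards [tendsto_inv_atTop_zero.eventually
    (eventually_add_smul_mem_of_mem_interior hv (p - k)), eventually_gt_atTop 0] with t ht htpos
  convert ht k hk t htpos.le using 1
  rw [smul_add, smul_smul, mul_inv_cancel₀ htpos.ne', one_smul]
  abel

theorem IsSawingHyperplane.apply_pos {K : Set (Fin n → ℝ)} {L : (Fin n → ℝ) →ₗ[ℝ] ℝ} {c : ℝ}
    (h : IsSawingHyperplane n K L c) {q u : Fin n → ℝ} (hq : IsVertexOf n K q) (hu : u ≠ 0)
    (hedge : IsEdgeOf n K (closedRay q u)) : 0 < L u := by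
  obtain ⟨_, ⟨t, ht, rfl⟩, hx⟩ := h.1 _ hedge (not_isBounded_closedRay hu)
  have := h.2 q hq
  simp only [Set.mem_ofPred_eq, map_add, map_smul, smul_eq_mul] at hx
  nlinarith

end FinDim

section PolyhedronFaces

variable {n : ℕ} {ι : Type*} {A : ι → (Fin n → ℝ) →ₗ[ℝ] ℝ} {b : ι → ℝ}

theorem isFaceOf_polyhedron_tight (hA : ∀ i, A i ≠ 0) (hdim : polyDim n (polyhedron A b) = n)
    {T : Finset ι} (hT : T.Nonempty) {q : Fin n → ℝ} (hq : q ∈ polyhedron A b)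
    (hqT : ∀ i ∈ T, A i q = b i) :
    IsFaceOf n (polyhedron A b) {x ∈ polyhedron A b | ∀ i ∈ T, A i x = b i} := by
  have happ : ∀ x, (∑ i ∈ T, A i) x = ∑ i ∈ T, A i x := fun x => by simp
  have htight : ∀ x ∈ polyhedron A b,
      (∑ i ∈ T, A i) x = ∑ i ∈ T, b i ↔ ∀ i ∈ T, A i x = b i := fun x hx => by
    rw [happ]
    exact Finset.sum_eq_sum_iff_of_le fun i _ => hx i
  have hNq : (∑ i ∈ T, A i) q = ∑ i ∈ T, b i := (htight q hq).mpr hqT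
  refine ⟨∑ i ∈ T, A i, ∑ i ∈ T, b i, fun hN => ?_, ⟨q, hq, hNq⟩,
    fun x hx => happ x ▸ Finset.sum_le_sum fun i _ => hx i, ?_⟩
  · obtain ⟨i₀, hi₀⟩ := hT
    refine hA i₀ (eq_zero_of_forall_eq_of_polyDim_eq hdim (c := b i₀) fun x hx => ?_)
    refine (htight x hx).mp ?_ i₀ hi₀
    rw [hN, LinearMap.zero_apply, ← hNq, hN, LinearMap.zero_apply]
  · ext x
    exact ⟨fun ⟨hx, hxT⟩ => ⟨hx, (htight x hx).mpr hxT⟩,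
      fun ⟨hx, hxN⟩ => ⟨hx, (htight x hx).mp hxN⟩⟩

theorem kerOn_eq_bot_of_isVertexOf {p : Fin n → ℝ} (hp : IsVertexOf n (polyhedron A b) p) :
    kerOn A Set.univ = ⊥ :=
  (Submodule.eq_bot_iff _).mpr fun z hz => hp.eq_zero_of_add_mem_of_sub_mem
    (fun i => by simpa [mem_kerOn.mp hz i trivial] using hp.mem i)
    (fun i => by simpa [mem_kerOn.mp hz i trivial] using hp.mem i)

theorem mem_polyhedron_zero_of_mem_recCone {x w : Fin n → ℝ} (hx : x ∈ polyhedron A b)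
    (hw : w ∈ recCone n (polyhedron A b)) : w ∈ polyhedron A 0 := by
  intro i
  by_contra! h
  have := hw x hx ((b i - A i x + 1) / A i w) (div_nonneg (by linarith [hx i]) h.le) i
  simp only [map_add, map_smul, smul_eq_mul, div_mul_cancel₀ _ h.ne'] at this
  linarith

variable [Fintype ι]

theorem isVertexOf_polyhedron_of_tight (hA : ∀ i, A i ≠ 0) (hdim : polyDim n (polyhedron A b) = n)
    {q u : Fin n → ℝ} (hq : q ∈ polyhedron A b) {j : ι} (hju : A j u < 0) (hjq : A j q = b j)
    (hext : kerOn A {i | A i u = 0 ∧ A i q = b i} ≤ ℝ ∙ u) :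
    IsVertexOf n (polyhedron A b) q := by
  classical
  have hface := isFaceOf_polyhedron_tight hA hdim (T := Finset.univ.filter fun i => A i q = b i)
    ⟨j, by simpa using hjq⟩ hq (by simp)
  show IsFaceOf n _ {q}
  convert hface using 1
  ext x
  simp only [Finset.mem_filter, Finset.mem_univ, true_and, Set.mem_singleton_iff]
  refine ⟨by rintro rfl; exact ⟨hq, fun i => id⟩, fun ⟨hx, hxT⟩ => ?_⟩
  have hxq : x - q ∈ kerOn A {i | A i u = 0 ∧ A i q = b i} :=
    mem_kerOn.mpr fun i ⟨_, hi⟩ => by rw [map_sub, hxT i hi, hi, sub_self]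
  obtain ⟨r, hr⟩ := Submodule.mem_span_singleton.mp (hext hxq)
  have : r * A j u = 0 := by rw [← smul_eq_mul, ← map_smul, hr, map_sub, hxT j hjq, hjq, sub_self]
  rw [(mul_eq_zero.mp this).resolve_right hju.ne, zero_smul, eq_comm, sub_eq_zero] at hr
  exact hr

theorem isEdgeOf_polyhedron_closedRay (hA : ∀ i, A i ≠ 0)
    (hdim : polyDim n (polyhedron A b) = n) {q u : Fin n → ℝ} (hq : q ∈ polyhedron A b)
    (hu : u ∈ polyhedron A 0) (hu0 : u ≠ 0) {j : ι} (hju : A j u < 0) (hjq : A j q = b j)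
    (hext : kerOn A {i | A i u = 0 ∧ A i q = b i} ≤ ℝ ∙ u)
    (hT : ∃ i, A i u = 0 ∧ A i q = b i) :
    IsEdgeOf n (polyhedron A b) (closedRay q u) := by
  classical
  refine ⟨?_, polyDim_closedRay hu0⟩
  have hface := isFaceOf_polyhedron_tight hA hdim
    (T := Finset.univ.filter fun i => A i u = 0 ∧ A i q = b i)
    (hT.imp fun i hi => by simpa using hi) hq (by simp_all)
  convert hface using 1
  ext x
  simp only [Finset.mem_filter, Finset.mem_univ, true_and]
  constructor
  · rintro ⟨t, ht, rfl⟩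
    refine ⟨fun i => ?_, fun i ⟨hiu, hiq⟩ => by simp [hiu, hiq]⟩
    simpa using add_le_add (hq i) (mul_nonpos_of_nonneg_of_nonpos ht (hu i))
  · rintro ⟨hx, hxT⟩
    have hxq : x - q ∈ kerOn A {i | A i u = 0 ∧ A i q = b i} :=
      mem_kerOn.mpr fun i hi => by rw [map_sub, hxT i hi, hi.2, sub_self]
    obtain ⟨r, hr⟩ := Submodule.mem_span_singleton.mp (hext hxq)
    -- constraint `j` is tight at `q` and decreases along `u`, so `x` cannot lie behind `q`
    have : r * A j u ≤ 0 := by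
      rw [← smul_eq_mul, ← map_smul, hr, map_sub, hjq]
      linarith [hx j]
    exact ⟨r, nonneg_of_mul_nonpos_left this hju, by rw [hr]; abel⟩

theorem apply_ne_zero_of_mem_interior_recCone (hA : ∀ i, A i ≠ 0)
    (hdim : polyDim n (polyhedron A b) = n) {p₀ : Fin n → ℝ}
    (hp₀ : IsVertexOf n (polyhedron A b) p₀) {L : (Fin n → ℝ) →ₗ[ℝ] ℝ} (hL : L ≠ 0) {c₀ : ℝ}
    (hsaw : IsSawingHyperplane n (polyhedron A b) L c₀) {v : Fin n → ℝ}
    (hv : v ∈ interior (recCone n (polyhedron A b))) : L v ≠ 0 := by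
  intro hLv
  have hpt := kerOn_eq_bot_of_isVertexOf hp₀
  have hv0 : v ≠ 0 := by
    rintro rfl
    exact hL (LinearMap.ext fun z => by
      simp [eq_zero_of_zero_mem_interior hp₀.recCone_pointed hv z])
  obtain ⟨w, hw, hLw⟩ := exists_apply_lt_of_mem_interior hL hv
  obtain ⟨u, hu, hLu, hext⟩ := exists_extreme_direction A hpt
    (mem_polyhedron_zero_of_mem_recCone hp₀.mem hw) (hLv ▸ hLw)
  have hu0 : u ≠ 0 := by rintro rfl; simp at hLu
  obtain ⟨q, hq, ⟨j, hju, hjq⟩, hqext⟩ :=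
    exists_tight_of_extreme_direction A b hpt hp₀.mem hu hu0 hext
  by_cases hT : ∃ i, A i u = 0 ∧ A i q = b i
  · have := hsaw.apply_pos (isVertexOf_polyhedron_of_tight hA hdim hq hju hjq hqext) hu0
      (isEdgeOf_polyhedron_closedRay hA hdim hq hu hu0 hju hjq hqext hT)
    linarith
  · -- no constraint cuts out the edge, so the whole space is the line through `u`
    have hvu : v ∈ kerOn A {i | A i u = 0 ∧ A i q = b i} :=
      mem_kerOn.mpr fun i hi => (hT ⟨i, hi⟩).elim
    obtain ⟨r, rfl⟩ := Submodule.mem_span_singleton.mp (hqext hvu)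
    rw [map_smul, smul_eq_mul] at hLv
    exact hv0 (by rw [(mul_eq_zero.mp hLv).resolve_right hLu.ne, zero_smul])

end PolyhedronFaces

theorem exists_hyperplane_with_singleton_ray_intersections_general
    (n : ℕ) (K : Set (Fin n → ℝ))
    (hpoly : IsConvexPolyhedron n K) (hdim : polyDim n K = n)
    (hnd : ∃ p, IsVertexOf n K p)
    (L : (Fin n → ℝ) →ₗ[ℝ] ℝ) (hL : L ≠ 0)
    (hFU : ∃ c₀ : ℝ,
      (∀ A : Set (Fin n → ℝ), IsEdgeOf n K A → ¬ IsBounded A →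
        (A ∩ {x | L x + c₀ = 0}).Nonempty) ∧
      (∀ p, IsVertexOf n K p → L p + c₀ < 0))
    (v : Fin n → ℝ) (hv : v ∈ interior (recCone n K))
    (G : Set (Fin n → ℝ)) (hG : G.Finite) :
    ∃ c : ℝ, ∀ p ∈ G, ∃ z : Fin n → ℝ,
      {x | ∃ t : ℝ, 0 ≤ t ∧ x = p + t • v} ∩ (K ∩ {x | L x + c = 0}) = {z} := by
  obtain ⟨m, A, b, hA, rfl⟩ := hpoly
  obtain ⟨c₀, hsaw⟩ := hFU
  obtain ⟨p₀, hp₀⟩ := hnd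
  have hLv : L v ≠ 0 := apply_ne_zero_of_mem_interior_recCone hA hdim hp₀ hL hsaw hv
  -- the ray from `p` meets `{L x = s * L v}` at parameter `s - L p / L v`
  have hlarge : ∀ᶠ s in atTop, ∀ p ∈ G,
      0 ≤ s - L p / L v ∧ p + (s - L p / L v) • v ∈ polyhedron A b :=
    (eventually_all_finite hG).mpr fun p _ =>
      (tendsto_atTop_add_const_right _ _ tendsto_id).eventually ((eventually_ge_atTop 0).and
        (eventually_add_smul_mem_of_mem_interior_recCone ⟨p₀, hp₀.mem⟩ hv p))
  obtain ⟨s, hs⟩ := hlarge.exists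
  refine ⟨-(s * L v), fun p hp => ⟨_, closedRay_inter_eq_singleton hLv (hs p hp).1 (hs p hp).2 ?_⟩⟩
  simp only [map_add, map_smul, smul_eq_mul]
  field_simp
  ring

/-- Lemma 1.6: if `K` is an `n`-dimensional non-degenerate unbounded convex polyhedron
in FU-position with respect to `ker L`, its recession cone has nonempty interior,
`v` is an interior point of the recession cone and `G` is finite, then there is a
hyperplane `Π` parallel to `ker L` such that `(p + ℝ≥0·v) ∩ (K ∩ Π)` is a singleton
for every `p ∈ G`. -/
theorem exists_hyperplane_with_singleton_ray_intersections
    (n : ℕ) (K : Set (Fin n → ℝ))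
    (hpoly : IsConvexPolyhedron n K) (hdim : polyDim n K = n)
    (hnd : ∃ p, IsVertexOf n K p) (hunb : ¬ IsBounded K)
    (L : (Fin n → ℝ) →ₗ[ℝ] ℝ) (hL : L ≠ 0)
    (hFU : ∃ c₀ : ℝ,
      (∀ A : Set (Fin n → ℝ), IsEdgeOf n K A → ¬ IsBounded A →
        (A ∩ {x | L x + c₀ = 0}).Nonempty) ∧
      (∀ p, IsVertexOf n K p → L p + c₀ < 0))
    (v : Fin n → ℝ) (hv : v ∈ interior (recCone n K))
    (G : Set (Fin n → ℝ)) (hG : G.Finite) :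
    ∃ c : ℝ, ∀ p ∈ G, ∃ z : Fin n → ℝ,
      {x | ∃ t : ℝ, 0 ≤ t ∧ x = p + t • v} ∩ (K ∩ {x | L x + c = 0}) = {z} :=
  exists_hyperplane_with_singleton_ray_intersections_general n K hpoly hdim hnd L hL hFU v hv G hG
end
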